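/- arXiv:1009.0943 — 2 statements merged into one kernel-verified Lean document; each statement's English description precedes it below -/
import Mathlib

section
/- Let c ∈ ℂ and R = ℂ[t, t^{-1}, u | u² = t⁴ − 2ct² + 1]. For all integers i, j, in Ω¹_R/dR one has (class of t^{i-1}u·d(t^{j-1}u)) = ( (j+1)δ_{i+j,−2} − 2cj·δ_{i+j,0} + (j−1)δ_{i+j,2} )·ω₀, where δ is the Kronecker delta. -/
noncomputable section
open Polynomial LaurentPolynomial

/-- The ring `R = ℂ[t,t⁻¹][u]/(u² − (t⁴ − 2ct² + 1))`, realized by adjoining a root `u`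
of `X² − (t⁴ − 2ct² + 1)` to the ring of Laurent polynomials `ℂ[t,t⁻¹]`. -/
abbrev DJKM (c : ℂ) : Type :=
  AdjoinRoot ((X : Polynomial (LaurentPolynomial ℂ)) ^ 2 -
    Polynomial.C (T 4 - 2 * LaurentPolynomial.C c * T 2 + 1))

/-- The element `t^i` of `R`, for `i : ℤ`. -/
def tp (c : ℂ) (i : ℤ) : DJKM c := AdjoinRoot.of _ (T i)

/-- The element `u` of `R`. -/
def uu (c : ℂ) : DJKM c := AdjoinRoot.root _

/-- The subspace `dR ⊆ Ω¹_R` of exact differentials. -/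
def dR (c : ℂ) : Submodule ℂ (KaehlerDifferential ℂ (DJKM c)) :=
  LinearMap.range (KaehlerDifferential.D ℂ (DJKM c)).toLinearMap

/-- The class of `f·dg` in `Ω¹_R/dR`. -/
def cls (c : ℂ) (f g : DJKM c) : KaehlerDifferential ℂ (DJKM c) ⧸ dR c :=
  Submodule.Quotient.mk (f • KaehlerDifferential.D ℂ (DJKM c) g)

/-- `ω_k` : the class of `t^k·u·dt` in `Ω¹_R/dR`. -/
def w (c : ℂ) (k : ℤ) : KaehlerDifferential ℂ (DJKM c) ⧸ dR c :=
  cls c (tp c k * uu c) (tp c 1)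

/-- `ω₀` : the class of `t⁻¹·dt` in `Ω¹_R/dR`. -/
def w0 (c : ℂ) : KaehlerDifferential ℂ (DJKM c) ⧸ dR c :=
  cls c (tp c (-1)) (tp c 1)

/-!
Writing `t^k` for the unit `t` of `R`, one has `d(t^k) = k t^(k-1) dt`, so `t^k dt` is exact unless
`k = -1`. Differentiating `u² = t⁴ - 2ct² + 1` gives `u du = (2t³ - 2ct) dt`, hence
`t^(i-1) u d(t^(j-1) u) = t^(i+j-2) u du + (j-1) t^(i+j-3) u² dt` is a Laurent polynomial in `t`
times `dt`, namely `((j+1) t^(i+j+1) - 2cj t^(i+j-1) + (j-1) t^(i+j-3)) dt`. Modulo exact forms only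
the coefficient of `t⁻¹ dt` survives.
-/

namespace Derivation

section Units

variable {R A M : Type*} [CommSemiring R] [CommRing A] [Algebra R A] [AddCommGroup M]
  [Module A M] [Module R M] (D : Derivation R A M)

theorem leibniz_units_zpow (t : Aˣ) (n : ℤ) :
    D ↑(t ^ n) = n • (↑(t ^ (n - 1)) : A) • D ↑t := by
  set err : ℤ → M := fun m ↦ D ↑(t ^ m) - m • (↑(t ^ (m - 1)) : A) • D ↑t with herr
  have step (m : ℤ) : err (m + 1) = (↑t : A) • err m := by
    have hD : D ↑(t ^ (m + 1)) = (↑(t ^ m) : A) • D ↑t + (↑t : A) • D ↑(t ^ m) := by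
      rw [zpow_add_one, Units.val_mul, leibniz]
    have hmul : (↑t : A) * ↑(t ^ (m - 1)) = ↑(t ^ m) := by
      rw [← Units.val_mul, ← zpow_one_add, add_sub_cancel]
    simp only [herr]
    rw [add_sub_cancel_right, hD, smul_sub, smul_comm (↑t : A) m, smul_smul, hmul, add_smul,
      one_smul]
    abel
  suffices err n = 0 from sub_eq_zero.1 this
  induction n using Int.induction_on with
  | zero => simp [herr]
  | succ k ih => rw [step, ih, smul_zero]
  | pred k ih =>
    rw [← sub_add_cancel (-(k : ℤ)) 1, step] at ih
    simpa using congr_arg ((↑t⁻¹ : A) • ·) ih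

end Units

variable {K A M : Type*} [Field K] [CommRing A] [Algebra K A] [AddCommGroup M]
  [Module A M] [Module K M] (D : Derivation K A M)

theorem units_zpow_smul_apply_mem_range [CharZero K] (t : Aˣ) {k : ℤ} (hk : k ≠ -1) :
    (↑(t ^ k) : A) • D ↑t ∈ LinearMap.range D.toLinearMap := by
  have hk' : ((k + 1 : ℤ) : K) ≠ 0 := by exact_mod_cast (by omega : k + 1 ≠ 0)
  refine ⟨((k + 1 : ℤ) : K)⁻¹ • ↑(t ^ (k + 1)), ?_⟩
  rw [coeFn_coe, map_smul, D.leibniz_units_zpow, add_sub_cancel_right,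
    ← Int.cast_smul_eq_zsmul K, smul_smul, inv_mul_cancel₀ hk', one_smul]

variable [IsScalarTower K A M] [NeZero (2 : K)] {c : K}

theorem smul_apply_self_of_sq_eq_quartic {t u : A} (hu : u ^ 2 = t ^ 4 - (2 * c) • t ^ 2 + 1) :
    u • D u = (2 : K) • t ^ 3 • D t - (2 * c) • t • D t := by
  have h := congr_arg D hu
  simp only [map_add, map_sub, map_smul, leibniz_pow, map_one_eq_zero] at h
  apply smul_right_injective M (two_ne_zero : (2 : K) ≠ 0)
  linear_combination (norm := skip) h
  match_scalars <;> simp only [map_ofNat] <;> ring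

theorem units_zpow_mul_smul_apply_of_sq_eq_quartic {t : Aˣ} {u : A}
    (hu : u ^ 2 = (t : A) ^ 4 - (2 * c) • (t : A) ^ 2 + 1) (i j : ℤ) :
    (↑(t ^ (i - 1)) * u) • D (↑(t ^ (j - 1)) * u) =
      ((j : K) + 1) • (↑(t ^ (i + j + 1)) : A) • D ↑t
        - (2 * c * j) • (↑(t ^ (i + j - 1)) : A) • D ↑t
        + ((j : K) - 1) • (↑(t ^ (i + j - 3)) : A) • D ↑t := by
  have hval (m n : ℤ) : (↑(t ^ (m + n)) : A) = ↑(t ^ m) * ↑(t ^ n) := by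
    rw [zpow_add, Units.val_mul]
  have hpow (n : ℕ) : (↑(t ^ (n : ℤ)) : A) = (t : A) ^ n := by
    rw [zpow_natCast, Units.val_pow_eq_pow_val]
  -- express every power of `t` through `t^(i-1)`, `t^(j-2)` and natural powers of `t`
  rw [D.leibniz, D.leibniz_units_zpow, ← Int.cast_smul_eq_zsmul K, sub_sub,
    show (1 : ℤ) + 1 = 2 from rfl, show j - 1 = j - 2 + (1 : ℕ) by omega,
    show i + j + 1 = i - 1 + (j - 2) + (4 : ℕ) by omega,
    show i + j - 1 = i - 1 + (j - 2) + (2 : ℕ) by omega, show i + j - 3 = i - 1 + (j - 2) by omega]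
  simp only [hval, hpow]
  linear_combination (norm := skip)
    (↑(t ^ (i - 1)) * ↑(t ^ (j - 2)) * (t : A)) • D.smul_apply_self_of_sq_eq_quartic hu
      + (algebraMap K A ((j : K) - 1) * ↑(t ^ (i - 1)) * ↑(t ^ (j - 2))) • hu • D ↑t
  match_scalars <;>
    simp only [Algebra.cast, Algebra.smul_def, map_mul, map_ofNat, mul_one] <;>
    ring

end Derivation

section DJKM

variable (c : ℂ)

theorem tp_add (a b : ℤ) : tp c (a + b) = tp c a * tp c b := by
  rw [tp, tp, tp, T_add, map_mul]

theorem tp_zero : tp c 0 = 1 := by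
  rw [tp, T_zero, map_one]

def tUnit : (DJKM c)ˣ :=
  Units.mkOfMulEqOne (tp c 1) (tp c (-1)) (by rw [← tp_add, add_neg_cancel, tp_zero])

theorem val_tUnit : (tUnit c : DJKM c) = tp c 1 := rfl

theorem tp_eq_tUnit_zpow (k : ℤ) : tp c k = ↑(tUnit c ^ k) := by
  induction k using Int.induction_on with
  | zero => rw [zpow_zero, Units.val_one, tp_zero]
  | succ k ih => rw [tp_add, ih, zpow_add_one, Units.val_mul]; rfl
  | pred k ih => rw [sub_eq_add_neg, tp_add, ih, zpow_add, zpow_neg_one, Units.val_mul]; rfl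

theorem uu_sq : uu c ^ 2 = (tUnit c : DJKM c) ^ 4 - (2 * c) • (tUnit c : DJKM c) ^ 2 + 1 := by
  have h := AdjoinRoot.eval₂_root ((X : Polynomial (LaurentPolynomial ℂ)) ^ 2 -
    Polynomial.C (T 4 - 2 * LaurentPolynomial.C c * T 2 + 1))
  rw [eval₂_sub, eval₂_pow, eval₂_X, Polynomial.eval₂_C, sub_eq_zero] at h
  rw [uu, h, val_tUnit, tp]
  simp [Algebra.smul_def, AdjoinRoot.algebraMap_eq', ← map_pow, map_ofNat LaurentPolynomial.C]

theorem mk_tp_smul_D_tp_one (k : ℤ) :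
    (Submodule.Quotient.mk (tp c k • KaehlerDifferential.D ℂ (DJKM c) (tp c 1)) :
      KaehlerDifferential ℂ (DJKM c) ⧸ dR c) = (if k = -1 then 1 else 0) • w0 c := by
  split_ifs with hk
  · rw [hk, one_smul]
    rfl
  · rw [zero_smul, Submodule.Quotient.mk_eq_zero, tp_eq_tUnit_zpow, ← val_tUnit]
    exact (KaehlerDifferential.D ℂ (DJKM c)).units_zpow_smul_apply_mem_range _ hk

end DJKM

/-- For all integers `i, j`, the class of `t^{i-1}u·d(t^{j-1}u)` equals
`((j+1)δ_{i+j,−2} − 2cj·δ_{i+j,0} + (j−1)δ_{i+j,2})·ω₀`. -/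
theorem stmt3 (c : ℂ) (i j : ℤ) :
    cls c (tp c (i - 1) * uu c) (tp c (j - 1) * uu c) =
      (((j : ℂ) + 1) * (if i + j = -2 then 1 else 0)
        - 2 * c * (j : ℂ) * (if i + j = 0 then 1 else 0)
        + ((j : ℂ) - 1) * (if i + j = 2 then 1 else 0)) • w0 c := by
  have key := (KaehlerDifferential.D ℂ (DJKM c)).units_zpow_mul_smul_apply_of_sq_eq_quartic
    (uu_sq c) i j
  simp only [← tp_eq_tUnit_zpow, val_tUnit] at key
  rw [cls, key]
  simp only [Submodule.Quotient.mk_add, Submodule.Quotient.mk_sub, Submodule.Quotient.mk_smul,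
    mk_tp_smul_D_tp_one, show i + j + 1 = -1 ↔ i + j = -2 by omega,
    show i + j - 1 = -1 ↔ i + j = 0 by omega, show i + j - 3 = -1 ↔ i + j = 2 by omega]
  module
end
end

section
/- Let c ∈ ℂ with c² ≠ 1. Define (P_{−3,k})_{k ≥ −4} by the initial values P_{−3,−4} = 0, P_{−3,−3} = 1, P_{−3,−2} = 0, P_{−3,−1} = 0 and the recursion (6+2k)P_{−3,k} = 4kc·P_{−3,k−2} − 2(k−3)·P_{−3,k−4} for k ≥ 0, and let P(z) = Σ_{k ≥ 0} P_{−3,k−4} z^k ∈ ℂ[[z]]. Let S ∈ ℂ[[z]] be the unique formal power series with constant term 1 satisfying S² = 1 − 2cz² + z⁴. Then (c² − 1)·P(z) = c²z − cz³ − z·S(z). -/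
/-! Both sides of the identity are power series whose coefficients satisfy the same four-term
recursion, which is the coefficientwise form of the differential operator
`L F = 2W·(X F') - (2 - 8cX² + 6X⁴)·F` with `W = 1 - 2cX² + X⁴`. For the generating series
of `P` this is the given recursion. Differentiating `S² = W` gives `2W S' = S W'`, which makes
`L (X S) = 0`, while `L (c²X - cX³)` is a multiple of `X³`; so the coefficients of `L` applied to
the right-hand side also vanish from degree `4` on. The recursion determines a series from its
first four coefficients, and these agree. -/

noncomputable section
open PowerSeries

namespace PowerSeries

variable {R : Type*} [CommRing R]

theorem two_mul_mul_derivative_of_sq_eq {S W : R⟦X⟧} (hS : S ^ 2 = W) :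
    2 * W * d⁄dX R S = S * d⁄dX R W := by
  rw [← hS, derivative_pow]
  push_cast
  ring

theorem coeff_X_mul_derivative (F : R⟦X⟧) (n : ℕ) :
    coeff n (X * d⁄dX R F) = n * coeff n F := by
  cases n with
  | zero => simp
  | succ n =>
    rw [coeff_succ_X_mul, coeff_derivative, mul_comm]
    push_cast
    ring

theorem derivative_one_sub_C_mul_X_sq_add_X_pow_four (c : R) :
    d⁄dX R (1 - C (2 * c) * X ^ 2 + X ^ 4) = -(4 * C c * X) + 4 * X ^ 3 := by
  simp only [map_add, map_sub, Derivation.map_one_eq_zero, Derivation.leibniz, derivative_X,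
    derivative_C, Derivation.leibniz_pow, smul_eq_mul, nsmul_eq_mul]
  simp only [map_mul, map_ofNat]
  ring

theorem coeff_one_eq_zero_and_coeff_two_of_sq_eq {K : Type*} [Field K] [CharZero K] {c : K}
    {S : K⟦X⟧} (hS0 : constantCoeff S = 1) (hS : S ^ 2 = 1 - C (2 * c) * X ^ 2 + X ^ 4) :
    coeff 1 S = 0 ∧ coeff 2 S = -c := by
  have h1 := congrArg (coeff 1) hS
  have h2 := congrArg (coeff 2) hS
  simp [sq, coeff_mul, Finset.Nat.antidiagonal_succ, coeff_X_pow, coeff_one, hS0] at h1 h2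
  refine ⟨h1, ?_⟩
  rw [h1] at h2
  linear_combination h2 / 2

end PowerSeries

section Recurrence

variable {R : Type*} [CommRing R] (c : R)

def recurrenceOp (F : R⟦X⟧) : R⟦X⟧ :=
  2 * (1 - C (2 * c) * X ^ 2 + X ^ 4) * (X * d⁄dX R F) - (2 - 8 * C c * X ^ 2 + 6 * X ^ 4) * F

theorem recurrenceOp_sub (F G : R⟦X⟧) :
    recurrenceOp c (F - G) = recurrenceOp c F - recurrenceOp c G := by
  simp only [recurrenceOp, map_sub]
  ring

theorem recurrenceOp_C_mul (a : R) (F : R⟦X⟧) :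
    recurrenceOp c (C a * F) = C a * recurrenceOp c F := by
  simp only [recurrenceOp, Derivation.leibniz, derivative_C, smul_eq_mul, mul_zero, add_zero]
  ring

theorem coeff_recurrenceOp (F : R⟦X⟧) (j : ℕ) :
    coeff (j + 4) (recurrenceOp c F) =
      (2 * j + 6) * coeff (j + 4) F - 4 * j * c * coeff (j + 2) F + 2 * (j - 3) * coeff j F := by
  have h2 (G : R⟦X⟧) : coeff (j + 4) (X ^ 2 * G) = coeff (j + 2) G :=
    coeff_X_pow_mul G 2 (j + 2)
  have h4 (G : R⟦X⟧) : coeff (j + 4) (X ^ 4 * G) = coeff j G := coeff_X_pow_mul G 4 j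
  have e : recurrenceOp c F = C 2 * (X * d⁄dX R F) - C (4 * c) * (X ^ 2 * (X * d⁄dX R F))
      + C 2 * (X ^ 4 * (X * d⁄dX R F)) - C 2 * F + C (8 * c) * (X ^ 2 * F)
      - C 6 * (X ^ 4 * F) := by
    simp only [recurrenceOp, map_mul, map_ofNat]
    ring
  rw [e]
  simp only [map_add, map_sub, coeff_C_mul, h2, h4, coeff_X_mul_derivative]
  push_cast
  ring

theorem recurrenceOp_X_mul_of_sq_eq {S : R⟦X⟧} (hS : S ^ 2 = 1 - C (2 * c) * X ^ 2 + X ^ 4) :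
    recurrenceOp c (X * S) = 0 := by
  have h := two_mul_mul_derivative_of_sq_eq hS
  rw [derivative_one_sub_C_mul_X_sq_add_X_pow_four] at h
  simp only [recurrenceOp, Derivation.leibniz, derivative_X, smul_eq_mul, map_mul,
    map_ofNat] at h ⊢
  linear_combination X ^ 2 * h

theorem recurrenceOp_C_mul_X_sub_C_mul_X_pow_three :
    recurrenceOp c (C (c ^ 2) * X - C c * X ^ 3) = C (4 * c * (c ^ 2 - 1)) * X ^ 3 := by
  simp only [recurrenceOp, map_sub, Derivation.leibniz, derivative_X, derivative_C,
    Derivation.leibniz_pow, smul_eq_mul]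
  simp only [map_mul, map_sub, map_pow, map_ofNat, map_one]
  ring

theorem coeff_recurrenceOp_mk {P : ℤ → R}
    (hrec : ∀ k : ℤ, 0 ≤ k →
      ((6 : R) + 2 * (k : R)) * P k = 4 * (k : R) * c * P (k - 2) - 2 * ((k : R) - 3) * P (k - 4))
    (j : ℕ) : coeff (j + 4) (recurrenceOp c (mk fun k => P ((k : ℤ) - 4))) = 0 := by
  have hj := hrec j j.cast_nonneg
  rw [Int.cast_natCast] at hj
  rw [coeff_recurrenceOp]
  simp only [coeff_mk, Nat.cast_add, Nat.cast_ofNat, add_sub_cancel_right]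
  rw [show (j : ℤ) + 2 - 4 = j - 2 by ring]
  linear_combination hj

variable [IsDomain R] [CharZero R]

theorem eq_zero_of_coeff_recurrenceOp {F : R⟦X⟧} (hinit : ∀ n < 4, coeff n F = 0)
    (hrec : ∀ j, coeff (j + 4) (recurrenceOp c F) = 0) : F = 0 := by
  ext n
  induction n using Nat.strong_induction_on with
  | _ n ih =>
    rw [map_zero]
    rcases lt_or_ge n 4 with hn | hn
    · exact hinit n hn
    obtain ⟨j, rfl⟩ := Nat.exists_eq_add_of_le' hn
    have h := coeff_recurrenceOp c F j
    rw [hrec, ih (j + 2) (by omega), ih j (by omega)] at h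
    have hne : (2 * j + 6 : R) ≠ 0 := by exact_mod_cast (by omega : 2 * j + 6 ≠ 0)
    simpa [hne] using h.symm

end Recurrence

theorem stmt14_general (c : ℂ) (P : ℤ → ℂ)
    (h4 : P (-4) = 0) (h3 : P (-3) = 1) (h2 : P (-2) = 0) (h1 : P (-1) = 0)
    (hrec : ∀ k : ℤ, 0 ≤ k →
      ((6 : ℂ) + 2 * (k : ℂ)) * P k = 4 * (k : ℂ) * c * P (k - 2) - 2 * ((k : ℂ) - 3) * P (k - 4))
    (S : PowerSeries ℂ) (hS0 : PowerSeries.constantCoeff S = 1)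
    (hS : S ^ 2 = 1 - PowerSeries.C (2 * c) * X ^ 2 + X ^ 4) :
    PowerSeries.C (c ^ 2 - 1) * PowerSeries.mk (fun k => P ((k : ℤ) - 4)) =
      PowerSeries.C (c ^ 2) * X - PowerSeries.C c * X ^ 3 - X * S := by
  obtain ⟨hs1, hs2⟩ := coeff_one_eq_zero_and_coeff_two_of_sq_eq hS0 hS
  rw [← sub_eq_zero]
  refine eq_zero_of_coeff_recurrenceOp c ?_ ?_
  · intro n hn
    rw [map_sub, coeff_C_mul, coeff_mk]
    simp only [map_sub, coeff_C_mul, coeff_X, coeff_X_pow]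
    interval_cases n <;> norm_num [coeff_succ_X_mul, h4, h3, h2, h1, hS0, hs1, hs2]
  · intro j
    rw [recurrenceOp_sub, recurrenceOp_C_mul, recurrenceOp_sub, recurrenceOp_X_mul_of_sq_eq c hS,
      recurrenceOp_C_mul_X_sub_C_mul_X_pow_three, map_sub, coeff_C_mul,
      coeff_recurrenceOp_mk c hrec,
      sub_zero, coeff_C_mul, coeff_X_pow, if_neg (by omega)]
    ring

/-- Let `c² ≠ 1` and let `(P_{−3,k})_{k ≥ −4}` have initial values
`P_{−3,−4} = 0`, `P_{−3,−3} = 1`, `P_{−3,−2} = P_{−3,−1} = 0` and satisfy the recursion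
`(6+2k)P_k = 4kc·P_{k−2} − 2(k−3)·P_{k−4}` for `k ≥ 0`.  If `S ∈ ℂ⟦z⟧` is the power series
with constant term `1` and `S² = 1 − 2cz² + z⁴`, then the generating series
`P(z) = Σ_{k ≥ 0} P_{−3,k−4} z^k` satisfies `(c² − 1)·P(z) = c²z − cz³ − z·S(z)`. -/
theorem stmt14 (c : ℂ) (hc : c ^ 2 ≠ 1) (P : ℤ → ℂ)
    (h4 : P (-4) = 0) (h3 : P (-3) = 1) (h2 : P (-2) = 0) (h1 : P (-1) = 0)
    (hrec : ∀ k : ℤ, 0 ≤ k →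
      ((6 : ℂ) + 2 * (k : ℂ)) * P k = 4 * (k : ℂ) * c * P (k - 2) - 2 * ((k : ℂ) - 3) * P (k - 4))
    (S : PowerSeries ℂ) (hS0 : PowerSeries.constantCoeff S = 1)
    (hS : S ^ 2 = 1 - PowerSeries.C (2 * c) * X ^ 2 + X ^ 4) :
    PowerSeries.C (c ^ 2 - 1) * PowerSeries.mk (fun k => P ((k : ℤ) - 4)) =
      PowerSeries.C (c ^ 2) * X - PowerSeries.C c * X ^ 3 - X * S :=
  stmt14_general c P h4 h3 h2 h1 hrec S hS0 hS
end
end
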